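/- arXiv:2003.09375 — 4 statements merged into one kernel-verified Lean document; each statement's English description precedes it below -/
import Mathlib

section
/- Let N be a positive integer, let Ω be an N × N real positive definite matrix, and let S be an N × N real positive semidefinite matrix. Then tr(Ω⁻¹ · S) · tr(Ω) ≥ (tr(S^{1/2}))², where S^{1/2} denotes the positive semidefinite square root of S. -/
/-!
The positive definite matrix `Ω⁻¹` defines the inner product `⟪X, Y⟫ = tr (Y Ω⁻¹ Xᴴ)` on square
matrices. Cauchy–Schwarz for `X = Ω` and `Y = S^{1/2}` gives the inequality, since
`⟪Ω, S^{1/2}⟫ = tr S^{1/2}`, `⟪S^{1/2}, S^{1/2}⟫ = tr (Ω⁻¹ S)` and `⟪Ω, Ω⟫ = tr Ω`;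
no square root of `Ω` is needed.
-/

namespace Matrix

variable {n : Type*} [Fintype n]

lemma PosSemidef.trace_mul_mul_conjTranspose_sq_le {M : Matrix n n ℝ} (hM : M.PosSemidef)
    (X Y : Matrix n n ℝ) :
    (Y * M * Xᴴ).trace ^ 2 ≤ (X * M * Xᴴ).trace * (Y * M * Yᴴ).trace := by
  let := M.toMatrixSeminormedAddCommGroup hM
  let := M.toMatrixInnerProductSpace hM
  exact (sq _).trans_le (real_inner_mul_inner_self_le X Y)

variable [DecidableEq n]

lemma PosDef.trace_sq_le_trace_inv_mul_mul_trace {Ω : Matrix n n ℝ} (hΩ : Ω.PosDef)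
    (T : Matrix n n ℝ) : T.trace ^ 2 ≤ (Ω⁻¹ * (Tᴴ * T)).trace * Ω.trace := by
  have hdet : IsUnit Ω.det := hΩ.isUnit.map detMonoidHom
  have hcs := hΩ.inv.posSemidef.trace_mul_mul_conjTranspose_sq_le Ω T
  rwa [hΩ.1.eq, mul_assoc, nonsing_inv_mul _ hdet, mul_one, mul_nonsing_inv _ hdet, one_mul,
    mul_comm, trace_mul_cycle, trace_mul_comm] at hcs

lemma IsHermitian.cfc_sqrt_eq {A : Matrix n n ℝ} (hA : A.IsHermitian) :
    cfc Real.sqrt A = hA.eigenvectorUnitary.1 * diagonal (fun i => Real.sqrt (hA.eigenvalues i)) *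
      (star hA.eigenvectorUnitary : Matrix n n ℝ) := by
  rw [hA.cfc_eq, IsHermitian.cfc, Unitary.conjStarAlgAut_apply]
  rfl

lemma PosSemidef.cfc_sqrt_mul_self {A : Matrix n n ℝ} (hA : A.PosSemidef) :
    cfc Real.sqrt A * cfc Real.sqrt A = A := by
  rw [← cfc_mul ..]
  conv_rhs => rw [← cfc_id' ℝ A hA.1]
  refine cfc_congr fun x hx => ?_
  obtain ⟨i, rfl⟩ := hA.1.spectrum_real_eq_range_eigenvalues ▸ hx
  exact Real.mul_self_sqrt (hA.eigenvalues_nonneg i)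

end Matrix

open Matrix in
theorem trace_inv_mul_trace_ge_sq_trace_sqrt_general (N : ℕ)
    (Ω S : Matrix (Fin N) (Fin N) ℝ) (hΩ : Ω.PosDef) (hS : S.PosSemidef) :
    (Ω⁻¹ * S).trace * Ω.trace ≥ ((hS.1.eigenvectorUnitary.1 * diagonal (fun i => Real.sqrt (hS.1.eigenvalues i)) *
      (star hS.1.eigenvectorUnitary : Matrix (Fin N) (Fin N) ℝ)).trace) ^ 2 := by
  have hsqrt_symm : (cfc Real.sqrt S)ᴴ = cfc Real.sqrt S := cfc_predicate (p := IsSelfAdjoint) _ _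
  have hcs := hΩ.trace_sq_le_trace_inv_mul_mul_trace (cfc Real.sqrt S)
  rwa [hsqrt_symm, hS.cfc_sqrt_mul_self, hS.1.cfc_sqrt_eq] at hcs

open Matrix in
/-- **Cauchy–Schwarz trace inequality (equation (19) of the paper).**
For an `N × N` real positive definite matrix `Ω` and an `N × N` real positive
semidefinite matrix `S`, one has `tr(Ω⁻¹ S) · tr(Ω) ≥ (tr(S^{1/2}))²`, where
`S^{1/2}` is the positive semidefinite square root of `S`. -/
theorem trace_inv_mul_trace_ge_sq_trace_sqrt (N : ℕ) (hN : 0 < N)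
    (Ω S : Matrix (Fin N) (Fin N) ℝ) (hΩ : Ω.PosDef) (hS : S.PosSemidef) :
    (Ω⁻¹ * S).trace * Ω.trace ≥ ((hS.1.eigenvectorUnitary.1 * diagonal (fun i => Real.sqrt (hS.1.eigenvalues i)) *
      (star hS.1.eigenvectorUnitary : Matrix (Fin N) (Fin N) ℝ)).trace) ^ 2 :=
  trace_inv_mul_trace_ge_sq_trace_sqrt_general N Ω S hΩ hS
end

section
/- Let d and N be positive integers, let W be a d × N real matrix, and let Ω be an N × N real positive definite matrix with tr(Ω) = 1. Then tr(W · Ω⁻¹ · Wᵀ) ≥ (tr((Wᵀ W)^{1/2}))², where (Wᵀ W)^{1/2} denotes the positive semidefinite square root of the positive semidefinite matrix Wᵀ W. -/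
/-!
A positive semidefinite `M` gives the semi-inner product `⟪X, Y⟫ = tr (Y M Xᵀ)` on square
matrices. For `M = Ω⁻¹` one has `⟪Ω, R⟫ = tr R`, `⟪Ω, Ω⟫ = tr Ω = 1` and, since `R` is symmetric
with `R² = WᵀW`, `⟪R, R⟫ = tr (R Ω⁻¹ R) = tr (W Ω⁻¹ Wᵀ)`; the bound is Cauchy–Schwarz.
-/

open Matrix

theorem Matrix.PosSemidef.trace_mul_mul_transpose_sq_le {n : Type*} [Fintype n]
    {M : Matrix n n ℝ} (hM : M.PosSemidef) (X Y : Matrix n n ℝ) :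
    (Y * M * Xᵀ).trace ^ 2 ≤ (X * M * Xᵀ).trace * (Y * M * Yᵀ).trace := by
  let := M.toMatrixSeminormedAddCommGroup hM
  let := M.toMatrixInnerProductSpace hM
  rw [sq]
  exact real_inner_mul_inner_self_le X Y

theorem Matrix.PosDef.trace_sq_le_trace_mul_trace_mul_inv_mul_transpose {n : Type*}
    [Fintype n] [DecidableEq n] {Ω : Matrix n n ℝ} (hΩ : Ω.PosDef) (R : Matrix n n ℝ) :
    R.trace ^ 2 ≤ Ω.trace * (R * Ω⁻¹ * Rᵀ).trace := by
  have hΩunit : IsUnit Ω.det := hΩ.isUnit.map detMonoidHom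
  have hΩsymm : Ωᵀ = Ω := hΩ.isHermitian
  simpa [hΩsymm, Matrix.mul_assoc, nonsing_inv_mul Ω hΩunit] using
    hΩ.inv.posSemidef.trace_mul_mul_transpose_sq_le Ω R

open Matrix in
theorem trace_regularizer_ge_general (d N : ℕ)
    (W : Matrix (Fin d) (Fin N) ℝ) (Ω : Matrix (Fin N) (Fin N) ℝ)
    (hΩ : Ω.PosDef) (hΩtr : Ω.trace = 1)
    (R : Matrix (Fin N) (Fin N) ℝ) (hR : R.PosSemidef) (hRsq : R * R = Wᵀ * W) :
    (W * Ω⁻¹ * Wᵀ).trace ≥ R.trace ^ 2 := by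
  have hRsymm : Rᵀ = R := hR.isHermitian
  have hreg : (W * Ω⁻¹ * Wᵀ).trace = (R * Ω⁻¹ * Rᵀ).trace :=
    calc (W * Ω⁻¹ * Wᵀ).trace = (Wᵀ * W * Ω⁻¹).trace := trace_mul_cycle ..
      _ = (R * R * Ω⁻¹).trace := by rw [hRsq]
      _ = (R * Ω⁻¹ * Rᵀ).trace := by rw [hRsymm, trace_mul_cycle R Ω⁻¹ R]
  simpa [hreg, hΩtr] using hΩ.trace_sq_le_trace_mul_trace_mul_inv_mul_transpose R

open Matrix in
/-- **Lower bound for the multitask regularizer (equation (19) of the paper).**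
For a `d × N` real matrix `W` and an `N × N` real positive definite matrix `Ω`
with `tr(Ω) = 1`, one has `tr(W Ω⁻¹ Wᵀ) ≥ (tr((Wᵀ W)^{1/2}))²`, where `R` with
`R.PosSemidef` and `R * R = Wᵀ * W` is the positive semidefinite square root of
the positive semidefinite matrix `Wᵀ W`. -/
theorem trace_regularizer_ge (d N : ℕ) (hd : 0 < d) (hN : 0 < N)
    (W : Matrix (Fin d) (Fin N) ℝ) (Ω : Matrix (Fin N) (Fin N) ℝ)
    (hΩ : Ω.PosDef) (hΩtr : Ω.trace = 1)
    (R : Matrix (Fin N) (Fin N) ℝ) (hR : R.PosSemidef) (hRsq : R * R = Wᵀ * W) :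
    (W * Ω⁻¹ * Wᵀ).trace ≥ R.trace ^ 2 :=
  trace_regularizer_ge_general d N W Ω hΩ hΩtr R hR hRsq
end

section
/- Let d and N be positive integers and let W be a d × N real matrix such that Wᵀ W is positive definite (equivalently, W has full column rank), so that tr((Wᵀ W)^{1/2}) > 0. Define Ω* = (Wᵀ W)^{1/2} / tr((Wᵀ W)^{1/2}). Then Ω* is positive definite, tr(Ω*) = 1, and tr(W · (Ω*)⁻¹ · Wᵀ) = (tr((Wᵀ W)^{1/2}))². -/
open scoped ComplexOrder

namespace Matrix

variable {m n 𝕜 : Type*} [Fintype n] [DecidableEq n]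

theorem PosSemidef.posDef_of_mul_self_posDef [RCLike 𝕜] {R : Matrix n n 𝕜}
    (hR : R.PosSemidef) (hRR : (R * R).PosDef) : R.PosDef :=
  hR.posDef_iff_isUnit.mpr <| isUnit_of_mul_isUnit_left hRR.isUnit

theorem trace_mul_inv_mul_eq_trace [Fintype m] [Field 𝕜] {W : Matrix m n 𝕜}
    {V : Matrix n m 𝕜} {R : Matrix n n 𝕜} (hR : IsUnit R.det) (hRR : R * R = V * W) :
    (W * R⁻¹ * V).trace = R.trace := by
  rw [trace_mul_cycle, ← hRR, Matrix.mul_assoc, mul_nonsing_inv _ hR, Matrix.mul_one]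

end Matrix

open Matrix in
theorem optimal_structure_matrix_attains_general (d N : ℕ) (hN : 0 < N)
    (W : Matrix (Fin d) (Fin N) ℝ) (hW : (Wᵀ * W).PosDef)
    (R : Matrix (Fin N) (Fin N) ℝ) (hR : R.PosSemidef) (hRsq : R * R = Wᵀ * W) :
    0 < R.trace ∧ ((R.trace)⁻¹ • R).PosDef ∧ ((R.trace)⁻¹ • R).trace = 1 ∧
      (W * ((R.trace)⁻¹ • R)⁻¹ * Wᵀ).trace = R.trace ^ 2 := by
  have : Nonempty (Fin N) := ⟨⟨0, hN⟩⟩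
  have hRpd : R.PosDef := hR.posDef_of_mul_self_posDef (hRsq ▸ hW)
  have htr : 0 < R.trace := hRpd.trace_pos
  have hdet : IsUnit R.det := (isUnit_iff_isUnit_det R).mp hRpd.isUnit
  refine ⟨htr, hRpd.smul (inv_pos.mpr htr),
    by rw [trace_smul, smul_eq_mul, inv_mul_cancel₀ htr.ne'], ?_⟩
  let := invertibleOfNonzero (inv_ne_zero htr.ne')
  rw [inv_smul R R.trace⁻¹ hdet, invOf_eq_inv, inv_inv, Matrix.mul_smul, Matrix.smul_mul,
    trace_smul, trace_mul_inv_mul_eq_trace hdet hRsq, smul_eq_mul, sq]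

open Matrix in
/-- **The optimal structure matrix attains the bound (equation (20) of the paper).**
Let `W` be a `d × N` real matrix with `Wᵀ W` positive definite, let `R` be the
positive semidefinite square root of `Wᵀ W` (so `tr R > 0`), and set
`Ω* = R / tr R`. Then `Ω*` is positive definite, `tr(Ω*) = 1`, and
`tr(W (Ω*)⁻¹ Wᵀ) = (tr((Wᵀ W)^{1/2}))²`. -/
theorem optimal_structure_matrix_attains (d N : ℕ) (hd : 0 < d) (hN : 0 < N)
    (W : Matrix (Fin d) (Fin N) ℝ) (hW : (Wᵀ * W).PosDef)
    (R : Matrix (Fin N) (Fin N) ℝ) (hR : R.PosSemidef) (hRsq : R * R = Wᵀ * W) :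
    0 < R.trace ∧ ((R.trace)⁻¹ • R).PosDef ∧ ((R.trace)⁻¹ • R).trace = 1 ∧
      (W * ((R.trace)⁻¹ • R)⁻¹ * Wᵀ).trace = R.trace ^ 2 :=
  optimal_structure_matrix_attains_general d N hN W hW R hR hRsq
end

section
/- Let d and N be positive integers and let W be a d × N real matrix such that Wᵀ W is positive definite. Then Ω* = (Wᵀ W)^{1/2} / tr((Wᵀ W)^{1/2}) is a minimizer of the function Ω ↦ tr(W · Ω⁻¹ · Wᵀ) over the set of N × N real positive definite matrices Ω with tr(Ω) = 1; that is, Ω* lies in this set and for every positive definite Ω with tr(Ω) = 1 one has tr(W · (Ω*)⁻¹ · Wᵀ) ≤ tr(W · Ω⁻¹ · Wᵀ). -/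
/-!
The minimum is identified by Cauchy–Schwarz for the Frobenius inner product. Writing
`Ω = Sᵀ S` with `S` invertible, `tr R = ⟨S, S⁻ᵀ R⟩`, so
`(tr R)² ≤ tr Ω · tr(R Ω⁻¹ R) = tr Ω · tr(W Ω⁻¹ Wᵀ)`, using `R² = Wᵀ W`.
For unit-trace `Ω` the right side is `tr(W Ω⁻¹ Wᵀ)`, while at `Ω* = R / tr R` the objective
equals `tr R · tr(W R⁻¹ Wᵀ) = (tr R)²`.
-/

namespace Matrix

variable {m n : Type*} [Fintype m] [Fintype n]

theorem trace_conjTranspose_mul_sq_le (A B : Matrix m n ℝ) :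
    (Aᴴ * B).trace ^ 2 ≤ (Aᴴ * A).trace * (Bᴴ * B).trace := by
  have h : ∀ C D : Matrix m n ℝ, (Cᴴ * D).trace = ∑ p : m × n, C p.1 p.2 * D p.1 p.2 := by
    intro C D
    simp only [trace, diag, mul_apply, conjTranspose_apply, star_trivial, Fintype.sum_prod_type]
    exact Finset.sum_comm
  simpa only [h, sq] using Finset.sum_mul_sq_le_sq_mul_sq Finset.univ
    (fun p : m × n => A p.1 p.2) (fun p : m × n => B p.1 p.2)

open scoped MatrixOrder in
theorem PosDef.exists_isUnit_eq_conjTranspose_mul_self [DecidableEq n] {Ω : Matrix n n ℝ}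
    (hΩ : Ω.PosDef) : ∃ S : Matrix n n ℝ, IsUnit S ∧ Ω = Sᴴ * S :=
  CStarAlgebra.isStrictlyPositive_iff_eq_star_mul_self.mp hΩ.isStrictlyPositive

theorem PosDef.trace_sq_le_trace_mul_trace_conjTranspose_mul_inv_mul [DecidableEq n]
    {Ω : Matrix n n ℝ} (hΩ : Ω.PosDef) (M : Matrix n n ℝ) :
    M.trace ^ 2 ≤ Ω.trace * (Mᴴ * Ω⁻¹ * M).trace := by
  obtain ⟨S, hS, rfl⟩ := hΩ.exists_isUnit_eq_conjTranspose_mul_self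
  have hM : M = Sᴴ * (Sᴴ⁻¹ * M) := by
    rw [← Matrix.mul_assoc, mul_nonsing_inv _ ((isUnit_iff_isUnit_det Sᴴ).mp hS.star),
      Matrix.one_mul]
  have hinv : (Sᴴ * S)⁻¹ = S⁻¹ * Sᴴ⁻¹ := Matrix.mul_inv_rev _ _
  calc M.trace ^ 2 = (Sᴴ * (Sᴴ⁻¹ * M)).trace ^ 2 := by rw [← hM]
    _ ≤ (Sᴴ * S).trace * ((Sᴴ⁻¹ * M)ᴴ * (Sᴴ⁻¹ * M)).trace :=
      trace_conjTranspose_mul_sq_le _ _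
    _ = (Sᴴ * S).trace * (Mᴴ * (Sᴴ * S)⁻¹ * M).trace := by
      rw [hinv, conjTranspose_mul, conjTranspose_nonsing_inv, conjTranspose_conjTranspose]
      simp only [Matrix.mul_assoc]

theorem trace_mul_mul_transpose_eq_of_mul_self_eq {α : Type*} [CommSemiring α]
    {W : Matrix m n α} {R : Matrix n n α} (hR : R * R = Wᵀ * W) (X : Matrix n n α) :
    (W * X * Wᵀ).trace = (R * X * R).trace := by
  rw [trace_mul_cycle, hR.symm, trace_mul_cycle R X R]

theorem trace_mul_inv_mul_transpose_eq_trace_of_mul_self_eq {α : Type*} [CommRing α]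
    [DecidableEq n] {W : Matrix m n α} {R : Matrix n n α} (hR : R * R = Wᵀ * W)
    (hdet : IsUnit R.det) : (W * R⁻¹ * Wᵀ).trace = R.trace := by
  rw [trace_mul_mul_transpose_eq_of_mul_self_eq hR, mul_nonsing_inv _ hdet, Matrix.one_mul]

end Matrix

open Matrix in
theorem optimal_structure_matrix_minimizes_general (d N : ℕ) (hN : 0 < N)
    (W : Matrix (Fin d) (Fin N) ℝ) (hW : (Wᵀ * W).PosDef)
    (R : Matrix (Fin N) (Fin N) ℝ) (hR : R.PosSemidef) (hRsq : R * R = Wᵀ * W) :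
    ((R.trace)⁻¹ • R).PosDef ∧ ((R.trace)⁻¹ • R).trace = 1 ∧
      ∀ Ω : Matrix (Fin N) (Fin N) ℝ, Ω.PosDef → Ω.trace = 1 →
        (W * ((R.trace)⁻¹ • R)⁻¹ * Wᵀ).trace ≤ (W * Ω⁻¹ * Wᵀ).trace := by
  have hRdet : R.det ≠ 0 := fun h => hW.det_pos.ne' <| by rw [← hRsq, det_mul, h, mul_zero]
  have hRpos : R.PosDef := hR.posDef_iff_det_ne_zero.mpr hRdet
  have : Nonempty (Fin N) := ⟨⟨0, hN⟩⟩
  set t := R.trace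
  have ht : 0 < t := hRpos.trace_pos
  have hinv : (t⁻¹ • R)⁻¹ = t • R⁻¹ := inv_eq_left_inv <| by
    rw [smul_mul_smul_comm, nonsing_inv_mul _ (isUnit_iff_ne_zero.mpr hRdet),
      mul_inv_cancel₀ ht.ne', one_smul]
  refine ⟨hRpos.smul (inv_pos.mpr ht), by rw [trace_smul, smul_eq_mul, inv_mul_cancel₀ ht.ne'],
    fun Ω hΩ hΩtr => ?_⟩
  calc (W * (t⁻¹ • R)⁻¹ * Wᵀ).trace
      = t * (W * R⁻¹ * Wᵀ).trace := by rw [hinv, Matrix.mul_smul, Matrix.smul_mul, trace_smul, smul_eq_mul]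
    _ = t ^ 2 := by
      rw [trace_mul_inv_mul_transpose_eq_trace_of_mul_self_eq hRsq
        (isUnit_iff_ne_zero.mpr hRdet), sq]
    _ ≤ Ω.trace * (Rᴴ * Ω⁻¹ * R).trace :=
      hΩ.trace_sq_le_trace_mul_trace_conjTranspose_mul_inv_mul R
    _ = (W * Ω⁻¹ * Wᵀ).trace := by
      rw [hΩtr, one_mul, hR.isHermitian.eq, trace_mul_mul_transpose_eq_of_mul_self_eq hRsq]

open Matrix in
/-- **Solution of the Ω-training subproblem (equations (18)–(20) of the paper).**
Let `W` be a `d × N` real matrix with `Wᵀ W` positive definite and let `R` be the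
positive semidefinite square root of `Wᵀ W`. Then `Ω* = R / tr R` is a minimizer
of `Ω ↦ tr(W Ω⁻¹ Wᵀ)` over the `N × N` real positive definite matrices of unit
trace: `Ω*` lies in this set and for every positive definite `Ω` with
`tr(Ω) = 1` one has `tr(W (Ω*)⁻¹ Wᵀ) ≤ tr(W Ω⁻¹ Wᵀ)`. -/
theorem optimal_structure_matrix_minimizes (d N : ℕ) (hd : 0 < d) (hN : 0 < N)
    (W : Matrix (Fin d) (Fin N) ℝ) (hW : (Wᵀ * W).PosDef)
    (R : Matrix (Fin N) (Fin N) ℝ) (hR : R.PosSemidef) (hRsq : R * R = Wᵀ * W) :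
    ((R.trace)⁻¹ • R).PosDef ∧ ((R.trace)⁻¹ • R).trace = 1 ∧
      ∀ Ω : Matrix (Fin N) (Fin N) ℝ, Ω.PosDef → Ω.trace = 1 →
        (W * ((R.trace)⁻¹ • R)⁻¹ * Wᵀ).trace ≤ (W * Ω⁻¹ * Wᵀ).trace :=
  optimal_structure_matrix_minimizes_general d N hN W hW R hR hRsq
end
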